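/- Let G be a 2K₂-free graph containing a cycle. Then some longest cycle of G is dominating, i.e., there is a longest cycle C such that G − V(C) has no edges. -/

import Mathlib

open SimpleGraph

/-- `G` is `2K₂`-free: no induced pair of independent edges. -/
def TwoK2Free {V : Type*} (G : SimpleGraph V) : Prop :=
  ¬ ∃ a b c d : V, G.Adj a b ∧ G.Adj c d ∧
      a ≠ c ∧ a ≠ d ∧ b ≠ c ∧ b ≠ d ∧
      ¬ G.Adj a c ∧ ¬ G.Adj a d ∧ ¬ G.Adj b c ∧ ¬ G.Adj b d

/-!
Take a longest cycle `C` leaving the fewest edges in `G - V(C)`, and suppose `ab` is such an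
edge. Two consecutive vertices of `C` cannot both have a neighbour in `{a, b}` (the edge between
them could be replaced by a detour through `a` or `a, b`), so some `y ∈ C` has none. By
`2K₂`-freeness applied to `ab` and the two cycle edges at `y`, both cycle neighbours `x, z` of `y`
have a neighbour in `{a, b}`, and maximality forces one vertex, say `a`, to be adjacent to both.
Replacing `y` by `a` gives another longest cycle. Every neighbour `c` of `y` lies on it: otherwise
`2K₂`-freeness applied to `ab` and `yc` yields `ac` or `bc`, and the cycle could be extended. So
no edge at `y` enters `G - V(C')`, while `ab` leaves it: a contradiction with the choice of `C`.
-/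

namespace SimpleGraph

variable {V : Type*} {G : SimpleGraph V}

theorem _root_.TwoK2Free.adj_or_adj (hG : TwoK2Free G) {a b c d : V} (hab : G.Adj a b)
    (hcd : G.Adj c d) (hac : ¬G.Adj a c) (hbc : ¬G.Adj b c) : G.Adj a d ∨ G.Adj b d := by
  by_contra! h
  refine hG ⟨a, b, c, d, hab, hcd, ?_, ?_, ?_, ?_, hac, h.1, hbc, h.2⟩
  · rintro rfl; exact hbc hab.symm
  · rintro rfl; exact hac hcd.symm
  · rintro rfl; exact hac hab
  · rintro rfl; exact hbc hcd.symm

/-- The edge set of `G - s`. -/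
def edgesAvoiding (G : SimpleGraph V) (s : Set V) : Set (Sym2 V) :=
  {e ∈ G.edgeSet | ∀ v ∈ e, v ∉ s}

theorem edgesAvoiding_insert_ssubset {s : Set V} {a b y : V}
    (hy : ∀ c, G.Adj y c → c ∈ insert a s) (hab : G.Adj a b) (ha : a ∉ insert y s)
    (hb : b ∉ insert y s) : G.edgesAvoiding (insert a s) ⊂ G.edgesAvoiding (insert y s) := by
  simp only [Set.mem_insert_iff, not_or] at ha hb
  refine (Set.ssubset_iff_of_subset ?_).2
    ⟨s(a, b), ⟨hab, by simp [ha, hb]⟩, fun h => h.2 a (Sym2.mem_mk_left a b) (Set.mem_insert a s)⟩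
  rintro e ⟨he, hes⟩
  refine ⟨he, fun v hv hvs => ?_⟩
  rcases hvs with rfl | hvs
  · obtain ⟨c, rfl⟩ := Sym2.mem_iff_exists.1 hv
    exact hes c (Sym2.mem_mk_right v c) (hy c he)
  · exact hes v hv (Set.mem_insert_of_mem a hvs)

namespace Walk

theorem IsCycle.length_le_card [Fintype V] {v : V} {C : G.Walk v v} (hC : C.IsCycle) :
    C.length ≤ Fintype.card V := by
  rw [← length_tail_add_one hC.not_nil]
  exact hC.isPath_tail.length_lt

theorem IsCycle.exists_isPath_of_mem {v y : V} {C : G.Walk v v} (hC : C.IsCycle)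
    (hy : y ∈ C.support) :
    ∃ (x z : V) (r : G.Walk z x), G.Adj x y ∧ G.Adj y z ∧ r.IsPath ∧ y ∉ r.support ∧
      r.length + 2 = C.length ∧ ∀ w, w ∈ C.support ↔ w = y ∨ w ∈ r.support := by
  classical
  have hD := hC.rotate hy
  have hlen := C.length_rotate y hy
  have hsupp : ∀ w, w ∈ (C.rotate y hy).support ↔ w ∈ C.support :=
    fun w => C.mem_support_rotate_iff y hy
  generalize C.rotate y hy = D at hD hlen hsupp
  cases D with
  | nil => simp at hD
  | cons hyz p =>
    cases p with
    | nil => exact absurd hyz (G.loopless.irrefl _)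
    | cons h p =>
      obtain ⟨x, r, hxy, hp⟩ := exists_cons_eq_concat h p
      rw [hp] at hD hlen hsupp
      have hpath := ((cons_isCycle_iff _ _).1 hD).1
      rw [isPath_def, support_concat, List.nodup_append] at hpath
      refine ⟨x, _, r, hxy, hyz, (isPath_def r).2 hpath.1, fun h => hpath.2.2 y h y (by simp) rfl,
        by simp only [length_cons, length_concat] at hlen; omega, fun w => ?_⟩
      rw [← hsupp]
      simp only [support_cons, support_concat, List.mem_cons, List.mem_append]
      tauto

theorem IsPath.length_add_three_le {L : ℕ} {u x p q : V} {r : G.Walk u x} (hr : r.IsPath)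
    (hmax : ∀ (w : V) (C : G.Walk w w), C.IsCycle → C.length ≤ L) (hp : p ∉ r.support)
    (hq : q ∉ r.support) (hxp : G.Adj x p) (hpq : G.Adj p q) (hqu : G.Adj q u) :
    r.length + 3 ≤ L := by
  have hpath : (cons hpq (cons hqu r)).IsPath := (hr.cons hq).cons (by simp [hpq.ne, hp])
  have hcyc : (cons hxp (cons hpq (cons hqu r))).IsCycle :=
    isCycle_iff_isPath_tail_and_le_length.2 ⟨by simpa using hpath, by simp⟩
  have := hmax x _ hcyc
  simp only [length_cons] at this
  omega

end Walk

open Walk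

section Longest

variable {L : ℕ}

theorem exists_mem_support_not_adj (hmax : ∀ (w : V) (C : G.Walk w w), C.IsCycle → C.length ≤ L)
    {v a b : V} {C : G.Walk v v} (hC : C.IsCycle) (hCL : C.length = L) (hab : G.Adj a b)
    (ha : a ∉ C.support) (hb : b ∉ C.support) : ∃ y ∈ C.support, ¬G.Adj a y ∧ ¬G.Adj b y := by
  obtain ⟨x, z, r, hxv, -, hr, hvr, hrC, hsupp⟩ := hC.exists_isPath_of_mem C.start_mem_support
  have har : a ∉ r.support := fun h => ha ((hsupp a).2 (.inr h))
  have hbr : b ∉ r.support := fun h => hb ((hsupp b).2 (.inr h))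
  have hav : a ≠ v := fun h => ha (h ▸ C.start_mem_support)
  have hbv : b ≠ v := fun h => hb (h ▸ C.start_mem_support)
  by_contra! h
  have hv := or_iff_not_imp_left.2 (h v C.start_mem_support)
  have hz := or_iff_not_imp_left.2 (h z ((hsupp z).2 (.inr r.start_mem_support)))
  rcases hv with hva | hvb <;> rcases hz with hza | hzb
  · have := hr.length_add_three_le hmax hvr har hxv hva.symm hza
    omega
  · have := (hr.cons hbr (h := hzb)).length_add_three_le hmax (by simp [hbv.symm, hvr])
      (by simp [hab.ne, har]) hxv hva.symm hab
    simp only [length_cons] at this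
    omega
  · have := (hr.cons har (h := hza)).length_add_three_le hmax (by simp [hav.symm, hvr])
      (by simp [hab.ne.symm, hbr]) hxv hvb.symm hab.symm
    simp only [length_cons] at this
    omega
  · have := hr.length_add_three_le hmax hvr hbr hxv hvb.symm hzb
    omega

theorem eq_or_mem_support_of_adj (hG : TwoK2Free G)
    (hmax : ∀ (w : V) (C : G.Walk w w), C.IsCycle → C.length ≤ L)
    {x y a b c : V} {s : G.Walk y x} (hs : s.IsPath) (hsL : L < s.length + 3)
    (has : a ∉ s.support) (hbs : b ∉ s.support) (hxa : G.Adj x a) (hab : G.Adj a b)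
    (hay : ¬G.Adj a y) (hby : ¬G.Adj b y) (hyc : G.Adj y c) : c = a ∨ c ∈ s.support := by
  by_contra! hc
  rcases hG.adj_or_adj hab hyc hay hby with hac | hbc
  · have := hs.length_add_three_le hmax has hc.2 hxa hac hyc.symm
    omega
  · have hcb : c ≠ b := by rintro rfl; exact hby hyc.symm
    have := (hs.cons hc.2 (h := hyc.symm)).length_add_three_le hmax (by simp [hc.1.symm, has])
      (by simp [hcb.symm, hbs]) hxa hab hbc
    simp only [length_cons] at this
    omega

theorem exists_isCycle_ncard_edgesAvoiding_lt_of_swap [Finite V] (hG : TwoK2Free G)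
    (hmax : ∀ (w : V) (C : G.Walk w w), C.IsCycle → C.length ≤ L)
    {x y z a b : V} {r : G.Walk z x} (hr : r.IsPath) (hr0 : 0 < r.length)
    (hrL : r.length + 2 = L) (hyr : y ∉ r.support) (hyz : G.Adj y z) (hab : G.Adj a b)
    (har : a ∉ r.support) (hbr : b ∉ r.support) (hay : a ≠ y) (hnay : ¬G.Adj a y)
    (hnby : ¬G.Adj b y) (hxa : G.Adj x a) (haz : G.Adj a z) :
    ∃ (w : V) (C : G.Walk w w), C.IsCycle ∧ C.length = L ∧
      (G.edgesAvoiding {u | u ∈ C.support}).ncard <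
        (G.edgesAvoiding (insert y {u | u ∈ r.support})).ncard := by
  have hby : b ≠ y := by rintro rfl; exact hnay hab
  have hC : (cons hxa (cons haz r)).IsCycle :=
    isCycle_iff_isPath_tail_and_le_length.2 ⟨by simp [hr, har], by simp only [length_cons]; omega⟩
  have hsupp : {u | u ∈ (cons hxa (cons haz r)).support} = insert a {u | u ∈ r.support} := by
    ext u
    simp only [support_cons, List.mem_cons, Set.mem_ofPred_eq, Set.mem_insert_iff]
    constructor
    · rintro (rfl | h)
      · exact .inr r.end_mem_support
      · exact h
    · exact .inr
  refine ⟨x, _, hC, by simp only [length_cons]; omega, ?_⟩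
  rw [hsupp]
  refine Set.ncard_lt_ncard (edgesAvoiding_insert_ssubset (fun c hyc => ?_) hab
    (by simp [hay, har]) (by simp [hby, hbr])) (Set.toFinite _)
  have := eq_or_mem_support_of_adj hG hmax (hr.cons hyr (h := hyz)) (by simp only [length_cons]; omega)
    (by simp [hay, har]) (by simp [hby, hbr]) hxa hab hnay hnby hyc
  simp only [support_cons, List.mem_cons] at this
  rcases this with h | rfl | h
  · exact .inl h
  · exact absurd hyc (G.loopless.irrefl _)
  · exact .inr h

theorem exists_isCycle_ncard_edgesAvoiding_lt [Finite V] (hG : TwoK2Free G)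
    (hmax : ∀ (w : V) (C : G.Walk w w), C.IsCycle → C.length ≤ L)
    {v a b : V} {C : G.Walk v v} (hC : C.IsCycle) (hCL : C.length = L) (hab : G.Adj a b)
    (ha : a ∉ C.support) (hb : b ∉ C.support) :
    ∃ (w : V) (C' : G.Walk w w), C'.IsCycle ∧ C'.length = L ∧
      (G.edgesAvoiding {u | u ∈ C'.support}).ncard <
        (G.edgesAvoiding {u | u ∈ C.support}).ncard := by
  obtain ⟨y, hyC, hay, hby⟩ := exists_mem_support_not_adj hmax hC hCL hab ha hb
  obtain ⟨x, z, r, hxy, hyz, hr, hyr, hrC, hsupp⟩ := hC.exists_isPath_of_mem hyC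
  have har : a ∉ r.support := fun h => ha ((hsupp a).2 (.inr h))
  have hbr : b ∉ r.support := fun h => hb ((hsupp b).2 (.inr h))
  have hr0 : 0 < r.length := by have := hC.three_le_length; omega
  rw [show {u | u ∈ C.support} = insert y {u | u ∈ r.support} from Set.ext hsupp]
  rcases hG.adj_or_adj hab hxy.symm hay hby with hax | hbx <;>
    rcases hG.adj_or_adj hab hyz hay hby with haz | hbz
  · exact exists_isCycle_ncard_edgesAvoiding_lt_of_swap hG hmax hr hr0 (by omega) hyr hyz hab
      har hbr (fun h => ha (h ▸ hyC)) hay hby hax.symm haz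
  · -- `x a b z` would replace `x y z` in `C`
    have := hr.length_add_three_le hmax har hbr hax.symm hab hbz
    omega
  · have := hr.length_add_three_le hmax hbr har hbx.symm hab.symm haz
    omega
  · exact exists_isCycle_ncard_edgesAvoiding_lt_of_swap hG hmax hr hr0 (by omega) hyr hyz
      hab.symm hbr har (fun h => hb (h ▸ hyC)) hby hay hbx.symm hbz

end Longest

theorem exists_isCycle_length_maximal [Fintype V] (h : ∃ (w : V) (C : G.Walk w w), C.IsCycle) :
    ∃ L, (∃ (w : V) (C : G.Walk w w), C.IsCycle ∧ C.length = L) ∧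
      ∀ (w : V) (C : G.Walk w w), C.IsCycle → C.length ≤ L := by
  let S := {n | ∃ (w : V) (C : G.Walk w w), C.IsCycle ∧ C.length = n}
  have hS : BddAbove S := ⟨Fintype.card V, by rintro _ ⟨w, C, hC, rfl⟩; exact hC.length_le_card⟩
  obtain ⟨w, C, hC⟩ := h
  exact ⟨sSup S, Nat.sSup_mem (s := S) ⟨_, w, C, hC, rfl⟩ hS,
    fun w C hC => le_csSup hS ⟨w, C, hC, rfl⟩⟩

end SimpleGraph

theorem stmt_8 {V : Type*} [Fintype V] (G : SimpleGraph V)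
    (hfree : TwoK2Free G)
    (hcyc : ∃ (w : V) (C : G.Walk w w), C.IsCycle) :
    ∃ (v : V) (C : G.Walk v v), C.IsCycle ∧
      (∀ (w : V) (C' : G.Walk w w), C'.IsCycle → C'.length ≤ C.length) ∧
      (∀ a b, G.Adj a b → a ∈ C.support ∨ b ∈ C.support) := by
  obtain ⟨L, ⟨v₀, C₀, hC₀⟩, hmax⟩ := exists_isCycle_length_maximal hcyc
  obtain ⟨⟨v, C⟩, ⟨hC, hCL⟩, hmin⟩ :=
    (measure fun p : Σ v, G.Walk v v => (G.edgesAvoiding {u | u ∈ p.2.support}).ncard).wf.has_min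
      {p | p.2.IsCycle ∧ p.2.length = L} ⟨⟨v₀, C₀⟩, hC₀⟩
  refine ⟨v, C, hC, hCL ▸ hmax, fun a b hab => ?_⟩
  by_contra! h
  obtain ⟨w, C', hC', hC'L, hlt⟩ :=
    exists_isCycle_ncard_edgesAvoiding_lt hfree hmax hC hCL hab h.1 h.2
  exact hmin ⟨w, C'⟩ ⟨hC', hC'L⟩ hlt
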